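/- arXiv:2108.11551 — 2 statements merged into one kernel-verified Lean document; each statement's English description precedes it below -/
import Mathlib

section
/- Let μ ∈ ℝ, A > 0 and D > 0 with 2π(A + D) > 1, and let γ > 0. Set σ² = A + D. Then for every y ∈ ℝ, the robust posterior variance strictly exceeds the standard posterior variance: D + w_γ(y; μ, σ²) · (D²/σ⁴) · {γ(y − μ)² − σ²} > A D/(A + D), where w_γ(y; μ, σ²) = φ(y; μ, σ²)^γ (2πσ²)^{γ²/(2(1+γ))}. -/
/-!
Since `γ > 0`, the weight `w = w_γ(y; μ, σ²)` equals
`(2πσ²)^{-γ/(2(1+γ))} exp(-γ(y-μ)²/(2σ²))`, so `2πσ² > 1` forces `0 ≤ w < 1`. Writing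
`t = γ(y-μ)² ≥ 0`, the robust variance exceeds the standard one `D - D²/σ²` by
`(D²/σ⁴)(w t + (1 - w)σ²) > 0`.
-/

open Real

/-- Density of `N(μ, σ²)`. -/
noncomputable def gaussPdf (y μ s2 : ℝ) : ℝ :=
  (Real.sqrt (2 * Real.pi * s2))⁻¹ * Real.exp (-(y - μ) ^ 2 / (2 * s2))

/-- γ-divergence weight `w_γ(y; μ, σ²) = φ(y;μ,σ²)^γ (2πσ²)^{γ²/(2(1+γ))}`. -/
noncomputable def gammaWeight (γ y μ s2 : ℝ) : ℝ :=
  gaussPdf y μ s2 ^ γ * (2 * Real.pi * s2) ^ (γ ^ 2 / (2 * (1 + γ)))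

lemma gaussPdf_eq_rpow_mul_exp {s2 : ℝ} (hs2 : 0 < s2) (y μ : ℝ) :
    gaussPdf y μ s2 = (2 * π * s2) ^ (-(1 / 2) : ℝ) * exp (-(y - μ) ^ 2 / (2 * s2)) := by
  rw [gaussPdf, sqrt_eq_rpow, ← rpow_neg (by positivity)]

lemma gammaWeight_nonneg (γ y μ : ℝ) {s2 : ℝ} (hs2 : 0 ≤ s2) : 0 ≤ gammaWeight γ y μ s2 := by
  unfold gammaWeight gaussPdf
  positivity

lemma gammaWeight_eq_rpow_mul_exp {γ : ℝ} (hγ : 1 + γ ≠ 0) (y μ : ℝ) {s2 : ℝ} (hs2 : 0 < s2) :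
    gammaWeight γ y μ s2 =
      (2 * π * s2) ^ (-(γ / (2 * (1 + γ)))) * exp (-(γ * (y - μ) ^ 2) / (2 * s2)) := by
  have hP : 0 < 2 * π * s2 := by positivity
  rw [gammaWeight, gaussPdf_eq_rpow_mul_exp hs2, mul_rpow (rpow_nonneg hP.le _) (exp_pos _).le,
    ← rpow_mul hP.le, ← exp_mul, mul_right_comm, ← rpow_add hP]
  congr 2
  · field_simp
    ring
  · ring

lemma gammaWeight_lt_one {γ : ℝ} (hγ : 0 < γ) (y μ : ℝ) {s2 : ℝ}
    (hP : 1 < 2 * π * s2) : gammaWeight γ y μ s2 < 1 := by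
  have hs2 : 0 < s2 := pos_of_mul_pos_right (zero_lt_one.trans hP) (by positivity)
  rw [gammaWeight_eq_rpow_mul_exp (by positivity) y μ hs2]
  have hpow : (2 * π * s2) ^ (-(γ / (2 * (1 + γ)))) < 1 :=
    rpow_lt_one_of_one_lt_of_neg hP (neg_neg_of_pos (by positivity))
  have hexp : exp (-(γ * (y - μ) ^ 2) / (2 * s2)) ≤ 1 :=
    exp_le_one_iff.mpr (div_nonpos_of_nonpos_of_nonneg (neg_nonpos.mpr (by positivity))
      (by positivity))
  calc _ ≤ (2 * π * s2) ^ (-(γ / (2 * (1 + γ)))) :=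
        mul_le_of_le_one_right (by positivity) hexp
    _ < 1 := hpow

lemma mul_div_add_lt_of_weight_lt_one {A D w t : ℝ} (hA : 0 < A) (hD : 0 < D)
    (hw₀ : 0 ≤ w) (hw₁ : w < 1) (ht : 0 ≤ t) :
    A * D / (A + D) < D + w * (D ^ 2 / (A + D) ^ 2) * (t - (A + D)) := by
  have hS : 0 < A + D := by positivity
  have hgap : 0 < w * t + (1 - w) * (A + D) :=
    add_pos_of_nonneg_of_pos (mul_nonneg hw₀ ht) (mul_pos (sub_pos.mpr hw₁) hS)
  have hstd : A * D / (A + D) = D - D ^ 2 / (A + D) ^ 2 * (A + D) := by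
    field_simp
    ring
  rw [hstd]
  nlinarith [mul_pos (by positivity : 0 < D ^ 2 / (A + D) ^ 2) hgap]

/-- For `γ > 0` and `2π(A+D) > 1`, the robust posterior variance strictly exceeds
the standard posterior variance `AD/(A+D)`. -/
theorem robust_variance_gt_standard (μ A D γ : ℝ) (hA : 0 < A) (hD : 0 < D)
    (h2pi : 1 < 2 * Real.pi * (A + D)) (hγ : 0 < γ) (y : ℝ) :
    A * D / (A + D) <
      D + gammaWeight γ y μ (A + D) * (D ^ 2 / (A + D) ^ 2)
        * (γ * (y - μ) ^ 2 - (A + D)) :=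
  mul_div_add_lt_of_weight_lt_one hA hD (gammaWeight_nonneg γ y μ (by positivity))
    (gammaWeight_lt_one hγ y μ h2pi) (by positivity)
end

section
/- Let σ² > 0 and D ∈ ℝ. There exists a constant K > 0, depending only on σ² and D, such that for all γ ∈ [0, 1] and all y, b ∈ ℝ, | [ D + w_γ(y; b, σ²) (D²/σ⁴){γ(y − b)² − σ²} ] − [ D − D²/σ² ] | ≤ K (1 + (y − b)²/σ²) (1 + (y − b)²) γ, where w_γ(y; b, σ²) = φ(y; b, σ²)^γ (2πσ²)^{γ²/(2(1+γ))} (and w_0 ≡ 1). -/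
/-!
With `L = log (2πσ²)` and `t = (y - b)²`, the weight is `w_γ = exp E` with
`E = -γ (t / (2σ²) + L / (2(1 + γ)))`. For `γ ∈ [0, 1]` we have `E ≤ |L| / 2` and
`|E| ≤ γ (t / (2σ²) + |L| / 2)`, hence `w_γ ≤ e^{|L|/2}` and `|w_γ - 1| ≤ |E| e^{|L|/2}`.
The deviation equals `(D² / σ⁴) (w_γ γ t - σ² (w_γ - 1))`, which is therefore
`O (γ (1 + t))`.
-/

open Real

theorem gaussPdf_eq_exp {s2 : ℝ} (hs2 : 0 < s2) (y μ : ℝ) :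
    gaussPdf y μ s2 = exp (-(log (2 * π * s2) / 2 + (y - μ) ^ 2 / (2 * s2))) := by
  rw [gaussPdf, sqrt_eq_rpow, rpow_def_of_pos (by positivity), ← exp_neg, ← exp_add]
  ring_nf

theorem gammaWeight_eq_exp {γ s2 : ℝ} (hs2 : 0 < s2) (hγ : 1 + γ ≠ 0) (y μ : ℝ) :
    gammaWeight γ y μ s2
      = exp (-(γ * ((y - μ) ^ 2 / (2 * s2) + log (2 * π * s2) / (2 * (1 + γ))))) := by
  rw [gammaWeight, gaussPdf_eq_exp hs2, rpow_def_of_pos (exp_pos _), log_exp,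
    rpow_def_of_pos (by positivity), ← exp_add]
  congr 1
  field_simp
  ring

theorem abs_exp_sub_one_le_abs_mul_exp {x c : ℝ} (hxc : x ≤ c) (hc : 0 ≤ c) :
    |exp x - 1| ≤ |x| * exp c := by
  rcases le_or_gt x 0 with hx | hx
  · have hexp : exp x ≤ 1 := exp_le_one_iff.mpr hx
    rw [abs_of_nonpos (by linarith), abs_of_nonpos hx]
    nlinarith [add_one_le_exp x, one_le_exp hc]
  · have hkey : exp x - 1 ≤ x * exp x := by
      have h := mul_le_mul_of_nonneg_right (one_sub_le_exp_neg x) (exp_pos x).le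
      rw [← exp_add, neg_add_cancel, exp_zero] at h
      linarith
    rw [abs_of_nonneg (by linarith [one_le_exp hx.le]), abs_of_pos hx]
    exact hkey.trans (mul_le_mul_of_nonneg_left (exp_le_exp.mpr hxc) hx.le)

theorem abs_div_two_mul_one_add_le (L : ℝ) {γ : ℝ} (hγ : 0 ≤ γ) :
    |L / (2 * (1 + γ))| ≤ |L| / 2 := by
  rw [abs_div, abs_of_pos (by positivity : (0 : ℝ) < 2 * (1 + γ))]
  exact div_le_div_of_nonneg_left (abs_nonneg L) two_pos (by linarith)

theorem robust_sub_standard_variance_eq {s2 : ℝ} (hs2 : s2 ≠ 0) (D w γ t : ℝ) :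
    (D + w * (D ^ 2 / s2 ^ 2) * (γ * t - s2)) - (D - D ^ 2 / s2)
      = D ^ 2 / s2 ^ 2 * (w * γ * t - s2 * (w - 1)) := by
  field_simp
  ring

section WeightBounds

variable {γ s2 : ℝ} (hs2 : 0 < s2) (hγ0 : 0 ≤ γ) (hγ1 : γ ≤ 1) (y μ : ℝ)
include hs2 hγ0 hγ1

theorem gammaWeight_le : gammaWeight γ y μ s2 ≤ exp (|log (2 * π * s2)| / 2) := by
  set L := log (2 * π * s2)
  rw [gammaWeight_eq_exp hs2 (by linarith), exp_le_exp]
  have ha : 0 ≤ γ * ((y - μ) ^ 2 / (2 * s2)) := by positivity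
  have hℓ := mul_le_mul_of_nonneg_left
    (neg_le_of_abs_le (abs_div_two_mul_one_add_le L hγ0)) hγ0
  have hγL : γ * (|L| / 2) ≤ |L| / 2 := mul_le_of_le_one_left (by positivity) hγ1
  linarith

theorem abs_gammaWeight_sub_one_le :
    |gammaWeight γ y μ s2 - 1|
      ≤ γ * ((y - μ) ^ 2 / (2 * s2) + |log (2 * π * s2)| / 2)
          * exp (|log (2 * π * s2)| / 2) := by
  set L := log (2 * π * s2)
  have ha : 0 ≤ (y - μ) ^ 2 / (2 * s2) := by positivity
  have hE : |γ * ((y - μ) ^ 2 / (2 * s2) + L / (2 * (1 + γ)))|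
      ≤ γ * ((y - μ) ^ 2 / (2 * s2) + |L| / 2) := by
    rw [abs_mul, abs_of_nonneg hγ0]
    gcongr
    exact (abs_add_le _ _).trans
      (by rw [abs_of_nonneg ha]; linarith [abs_div_two_mul_one_add_le L hγ0])
  have hw := gammaWeight_le hs2 hγ0 hγ1 y μ
  rw [gammaWeight_eq_exp hs2 (by linarith)] at hw ⊢
  rw [exp_le_exp] at hw
  refine (abs_exp_sub_one_le_abs_mul_exp hw (by positivity)).trans ?_
  rw [abs_neg]
  gcongr

theorem abs_gammaWeight_deviation_le :
    |gammaWeight γ y μ s2 * γ * (y - μ) ^ 2 - s2 * (gammaWeight γ y μ s2 - 1)|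
      ≤ γ * exp (|log (2 * π * s2)| / 2) * (3 / 2 + s2 * |log (2 * π * s2)| / 2)
          * (1 + (y - μ) ^ 2) := by
  set w := gammaWeight γ y μ s2
  set t := (y - μ) ^ 2
  set L := log (2 * π * s2)
  have hw0 : 0 ≤ w := by
    simp only [w, gammaWeight, gaussPdf]
    positivity
  have hwM := gammaWeight_le hs2 hγ0 hγ1 y μ
  have hw1 := abs_gammaWeight_sub_one_le hs2 hγ0 hγ1 y μ
  have ht : 0 ≤ t := sq_nonneg _
  calc |w * γ * t - s2 * (w - 1)|
      ≤ w * γ * t + s2 * |w - 1| := by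
        refine (abs_sub _ _).trans_eq ?_
        rw [abs_of_nonneg (by positivity), abs_mul, abs_of_pos hs2]
    _ ≤ exp (|L| / 2) * γ * t + s2 * (γ * (t / (2 * s2) + |L| / 2) * exp (|L| / 2)) := by
        gcongr
    _ = γ * exp (|L| / 2) * (3 * t / 2 + s2 * |L| / 2) := by
        field_simp
        ring
    _ ≤ γ * exp (|L| / 2) * (3 / 2 + s2 * |L| / 2) * (1 + t) := by
        rw [mul_assoc _ (3 / 2 + _)]
        gcongr
        nlinarith [mul_nonneg (mul_nonneg hs2.le (abs_nonneg L)) ht]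

end WeightBounds

/-- Bound (S10): the robust posterior variance deviates from the standard posterior
variance `D − D²/σ²` at most linearly in `γ`. -/
theorem robust_variance_deviation_bound (s2 D : ℝ) (hs2 : 0 < s2) :
    ∃ K > 0, ∀ γ ∈ Set.Icc (0 : ℝ) 1, ∀ y b : ℝ,
      |(D + gammaWeight γ y b s2 * (D ^ 2 / s2 ^ 2) * (γ * (y - b) ^ 2 - s2))
          - (D - D ^ 2 / s2)|
        ≤ K * (1 + (y - b) ^ 2 / s2) * (1 + (y - b) ^ 2) * γ := by
  set L := log (2 * π * s2)
  set C := D ^ 2 / s2 ^ 2 * exp (|L| / 2) * (3 / 2 + s2 * |L| / 2)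
  refine ⟨C + 1, by positivity, ?_⟩
  rintro γ ⟨hγ0, hγ1⟩ y b
  rw [robust_sub_standard_variance_eq hs2.ne', abs_mul, abs_of_nonneg (by positivity)]
  calc D ^ 2 / s2 ^ 2 * |gammaWeight γ y b s2 * γ * (y - b) ^ 2
          - s2 * (gammaWeight γ y b s2 - 1)|
      ≤ D ^ 2 / s2 ^ 2 * (γ * exp (|L| / 2) * (3 / 2 + s2 * |L| / 2) * (1 + (y - b) ^ 2)) := by
        gcongr
        exact abs_gammaWeight_deviation_le hs2 hγ0 hγ1 y b
    _ = C * 1 * (1 + (y - b) ^ 2) * γ := by ring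
    _ ≤ (C + 1) * (1 + (y - b) ^ 2 / s2) * (1 + (y - b) ^ 2) * γ := by
        have : 0 ≤ (y - b) ^ 2 / s2 := by positivity
        gcongr <;> linarith
end
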